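/- arXiv:2406.15084 — 5 statements merged into one kernel-verified Lean document; each statement's English description precedes it below -/
import Mathlib

section
/- Let G be a finite simple graph with at least one vertex of odd degree. Then Σ over all subsets V₁ ⊆ V(G), with V₂ = V(G) \ V₁, of (-1)^{|E(V₁,V₂)|} equals 0. -/
open Finset

variable {V : Type*} [Fintype V] [DecidableEq V]

/-- The number of edges of `G` with exactly one endpoint in `s`. -/
def crossCard (G : SimpleGraph V) [DecidableRel G.Adj] (s : Finset V) : ℕ :=
  (G.edgeFinset.filter (fun e => ∃ u ∈ e, ∃ v ∈ e, u ∈ s ∧ v ∉ s)).card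

private lemma mem_sd_self (s : Finset V) (v : V) :
    v ∈ symmDiff s {v} ↔ v ∉ s := by
  simp [Finset.mem_symmDiff]

private lemma mem_sd_other (s : Finset V) {v x : V} (hx : x ≠ v) :
    x ∈ symmDiff s {v} ↔ x ∈ s := by
  simp [Finset.mem_symmDiff, hx]

private lemma cross_pred_iff (t : Finset V) (a b : V) :
    (∃ u ∈ (s(a, b) : Sym2 V), ∃ w ∈ (s(a, b) : Sym2 V), u ∈ t ∧ w ∉ t) ↔
      ((a ∈ t ∧ b ∉ t) ∨ (b ∈ t ∧ a ∉ t)) := by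
  simp only [Sym2.mem_iff]
  constructor
  · rintro ⟨u, hu, w, hw, hut, hwt⟩
    rcases hu with rfl | rfl <;> rcases hw with rfl | rfl <;> tauto
  · rintro (⟨h1, h2⟩ | ⟨h1, h2⟩)
    · exact ⟨a, Or.inl rfl, b, Or.inr rfl, h1, h2⟩
    · exact ⟨b, Or.inr rfl, a, Or.inl rfl, h1, h2⟩

private lemma flip_of_mem (G : SimpleGraph V) [DecidableRel G.Adj] (v : V) (s : Finset V)
    (e : Sym2 V) (he : e ∈ G.edgeFinset) (hv : v ∈ e) :
    (∃ u ∈ e, ∃ w ∈ e, u ∈ symmDiff s {v} ∧ w ∉ symmDiff s {v}) ↔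
      ¬ (∃ u ∈ e, ∃ w ∈ e, u ∈ s ∧ w ∉ s) := by
  induction e with
  | _ a b =>
    have hab : a ≠ b := (SimpleGraph.mem_edgeFinset.mp he).ne
    rw [cross_pred_iff, cross_pred_iff]
    rcases Sym2.mem_iff.mp hv with rfl | rfl
    · rw [mem_sd_self, mem_sd_other s (Ne.symm hab)]
      tauto
    · rw [mem_sd_self, mem_sd_other s hab]
      tauto

private lemma same_of_notMem (v : V) (s : Finset V) (e : Sym2 V) (hv : v ∉ e) :
    (∃ u ∈ e, ∃ w ∈ e, u ∈ symmDiff s {v} ∧ w ∉ symmDiff s {v}) ↔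
      (∃ u ∈ e, ∃ w ∈ e, u ∈ s ∧ w ∉ s) := by
  induction e with
  | _ a b =>
    simp only [Sym2.mem_iff, not_or] at hv
    rw [cross_pred_iff, cross_pred_iff, mem_sd_other s (fun h => hv.1 h.symm),
      mem_sd_other s (fun h => hv.2 h.symm)]

private lemma cross_parity (G : SimpleGraph V) [DecidableRel G.Adj] (v : V) (s : Finset V) :
    ∃ k, crossCard G (symmDiff s {v}) + crossCard G s = G.degree v + 2 * k := by
  classical
  set E := G.edgeFinset with hE
  set p : Finset V → Sym2 V → Prop := fun t e => ∃ u ∈ e, ∃ w ∈ e, u ∈ t ∧ w ∉ t with hp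
  refine ⟨(E.filter (fun e => p s e ∧ v ∉ e)).card, ?_⟩
  have split : ∀ t : Finset V, crossCard G t =
      (E.filter (fun e => p t e ∧ v ∈ e)).card + (E.filter (fun e => p t e ∧ v ∉ e)).card := by
    intro t
    rw [crossCard, ← Finset.filter_filter, ← Finset.filter_filter,
      Finset.card_filter_add_card_filter_not (p := fun e => v ∈ e)]
  rw [split, split]
  have hBeq : E.filter (fun e => p (symmDiff s {v}) e ∧ v ∉ e)
      = E.filter (fun e => p s e ∧ v ∉ e) := by
    apply Finset.filter_congr
    intro e _
    by_cases hv : v ∈ e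
    · simp [hv]
    · simp only [hv, not_false_iff, and_true]
      exact same_of_notMem v s e hv
  have hAeq : (E.filter (fun e => p (symmDiff s {v}) e ∧ v ∈ e)).card
      = (E.filter (fun e => ¬ p s e ∧ v ∈ e)).card := by
    congr 1
    apply Finset.filter_congr
    intro e he
    by_cases hv : v ∈ e
    · simp only [hv, and_true]
      exact flip_of_mem G v s e he hv
    · simp [hv]
  have hdeg : (E.filter (fun e => ¬ p s e ∧ v ∈ e)).card
      + (E.filter (fun e => p s e ∧ v ∈ e)).card = G.degree v := by
    rw [← G.card_incidenceFinset_eq_degree v, G.incidenceFinset_eq_filter v]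
    have hsw : ∀ (q : Sym2 V → Prop) (_ : DecidablePred q), E.filter (fun e => q e ∧ v ∈ e)
        = (E.filter (fun e => v ∈ e)).filter (fun e => q e) := by
      intro q _
      rw [Finset.filter_filter]
      exact Finset.filter_congr fun e _ => by tauto
    rw [hsw _ inferInstance, hsw _ inferInstance, add_comm,
      Finset.card_filter_add_card_filter_not (p := fun e => p s e)]
  rw [hBeq, hAeq]
  omega

theorem sum_cross_of_odd (G : SimpleGraph V) [DecidableRel G.Adj]
    (h : ∃ v : V, Odd (G.degree v)) :
    ∑ s : Finset V, (-1 : ℤ) ^ crossCard G s = 0 := by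
  obtain ⟨v, hv⟩ := h
  apply Finset.sum_ninvolution (fun s => symmDiff s {v})
  · intro s
    have hpar : Odd (crossCard G (symmDiff s {v}) + crossCard G s) := by
      obtain ⟨k, hk⟩ := cross_parity G v s
      rw [hk]
      exact hv.add_even (even_two_mul _)
    have hmul : (-1 : ℤ) ^ (crossCard G (symmDiff s {v}) + crossCard G s) = -1 :=
      hpar.neg_one_pow
    rw [pow_add] at hmul
    have h1 : (-1 : ℤ) ^ crossCard G s = 1 ∨ (-1 : ℤ) ^ crossCard G s = -1 :=
      neg_one_pow_eq_or ℤ _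
    rcases h1 with h1 | h1 <;> rw [h1] at hmul ⊢ <;> omega
  · intro s _ hcontra
    have hmem : v ∈ symmDiff s {v} ↔ v ∉ s := mem_sd_self s v
    rw [hcontra] at hmem
    tauto
  · intro s
    exact Finset.mem_univ _
  · intro s
    simp [symmDiff_assoc]
end

section
/- For any finite simple graph G, Σ over all subsets V₁ ⊆ V(G), with V₂ = V(G)\V₁, of (-1)^{|E(V₁,V₂)|} equals 2^{|V(G)|} if every vertex of G has even degree, and 0 otherwise. -/
open Finset

variable {V : Type*} [Fintype V] [DecidableEq V]

open SimpleGraph in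
lemma degree_sum_parity (G : SimpleGraph V) [DecidableRel G.Adj] (s : Finset V) :
    ∃ k, ∑ v ∈ s, G.degree v = 2 * k + crossCard G s := by
  classical
  -- darts with fst in s
  have hD : #(univ.filter fun d : G.Dart => d.fst ∈ s) = ∑ v ∈ s, G.degree v := by
    rw [card_eq_sum_card_fiberwise (f := fun d : G.Dart => d.fst) (s := univ.filter fun d : G.Dart => d.fst ∈ s) (t := s)
      (fun d hd => (mem_filter.mp hd).2)]
    refine Finset.sum_congr rfl fun v hv => ?_
    rw [filter_filter]
    rw [← G.dart_fst_fiber_card_eq_degree v]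
    congr 1
    apply filter_congr
    intro d _
    constructor
    · rintro ⟨_, h⟩; exact h
    · rintro rfl; exact ⟨hv, rfl⟩
  -- split by snd ∈ s
  have hsplit : #(univ.filter fun d : G.Dart => d.fst ∈ s)
      = #(univ.filter fun d : G.Dart => d.fst ∈ s ∧ d.snd ∈ s)
        + #(univ.filter fun d : G.Dart => d.fst ∈ s ∧ d.snd ∉ s) := by
    rw [← filter_filter, ← filter_filter,
      card_filter_add_card_filter_not (fun d : G.Dart => d.snd ∈ s)]
  -- both-endpoints darts: even count
  have memedge : ∀ (d : G.Dart) (u : V), u ∈ d.edge ↔ u = d.fst ∨ u = d.snd := by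
    intro d u
    rw [show d.edge = s(d.fst, d.snd) from rfl, Sym2.mem_iff]
  have hA : ∃ k, #(univ.filter fun d : G.Dart => d.fst ∈ s ∧ d.snd ∈ s) = 2 * k := by
    refine ⟨#(G.edgeFinset.filter (fun e => ∀ u ∈ e, u ∈ s)), ?_⟩
    rw [card_eq_sum_card_fiberwise (f := fun d : G.Dart => d.edge)
      (t := G.edgeFinset.filter (fun e => ∀ u ∈ e, u ∈ s))
      (fun d hd => ?_)]
    · rw [mul_comm]
      rw [Finset.sum_congr rfl (fun e he => ?_), Finset.sum_const, smul_eq_mul]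
      have heE : e ∈ G.edgeSet := mem_edgeFinset.mp (mem_filter.mp he).1
      rw [← G.dart_edge_fiber_card e heE]
      congr 1
      rw [filter_filter]
      apply filter_congr
      intro d _
      constructor
      · rintro ⟨_, h⟩; exact h
      · rintro rfl
        have := (mem_filter.mp he).2
        exact ⟨⟨this d.fst ((memedge d d.fst).mpr (Or.inl rfl)),
          this d.snd ((memedge d d.snd).mpr (Or.inr rfl))⟩, rfl⟩
    · have hd' := (mem_filter.mp hd).2
      rw [Finset.mem_coe, mem_filter, mem_edgeFinset]
      refine ⟨d.edge_mem, fun u hu => ?_⟩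
      rcases (memedge d u).mp hu with rfl | rfl
      · exact hd'.1
      · exact hd'.2
  -- cross darts: equal to crossCard
  have hB : #(univ.filter fun d : G.Dart => d.fst ∈ s ∧ d.snd ∉ s) = crossCard G s := by
    apply Finset.card_bij (fun d _ => d.edge)
    · intro d hd
      have hd' := (mem_filter.mp hd).2
      rw [mem_filter, mem_edgeFinset]
      exact ⟨d.edge_mem, d.fst, (memedge d d.fst).mpr (Or.inl rfl),
        d.snd, (memedge d d.snd).mpr (Or.inr rfl), hd'⟩
    · intro d₁ h₁ d₂ h₂ he
      rcases (dart_edge_eq_iff d₁ d₂).mp he with h | h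
      · exact h
      · exfalso
        have h₁' := (mem_filter.mp h₁).2
        have h₂' := (mem_filter.mp h₂).2
        rw [h] at h₁'
        exact h₂'.2 h₁'.1
    · intro e he
      obtain ⟨heE, u, hu, v, hv, hus, hvs⟩ := mem_filter.mp he
      rw [mem_edgeFinset] at heE
      have huv : u ≠ v := fun h => hvs (h ▸ hus)
      have heq : e = s(u, v) := (Sym2.mem_and_mem_iff huv).mp ⟨hu, hv⟩
      have hadj : G.Adj u v := by rwa [heq, mem_edgeSet] at heE
      refine ⟨⟨(u, v), hadj⟩, mem_filter.mpr ⟨mem_univ _, hus, hvs⟩, heq.symm⟩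
  obtain ⟨k, hk⟩ := hA
  exact ⟨k, by rw [← hD, hsplit, hk, hB]⟩

theorem sum_cross_eq_ite (G : SimpleGraph V) [DecidableRel G.Adj] :
    ∑ s : Finset V, (-1 : ℤ) ^ crossCard G s =
      if ∀ v : V, Even (G.degree v) then 2 ^ Fintype.card V else 0 := by
  classical
  have key : ∀ s : Finset V, (-1 : ℤ) ^ crossCard G s = ∏ v ∈ s, (-1 : ℤ) ^ G.degree v := by
    intro s
    obtain ⟨k, hk⟩ := degree_sum_parity G s
    rw [Finset.prod_pow_eq_pow_sum, hk, pow_add, pow_mul]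
    norm_num
  rw [Finset.sum_congr rfl (fun s _ => key s)]
  have := Finset.prod_add (fun v : V => (-1 : ℤ) ^ G.degree v) (fun _ : V => (1:ℤ)) univ
  simp only [Finset.prod_const_one, mul_one, powerset_univ] at this
  rw [← this]
  split_ifs with h
  · have h2 : ∀ v ∈ (univ : Finset V), (-1:ℤ) ^ G.degree v + 1 = 2 :=
      fun v _ => by rw [Even.neg_one_pow (h v)]; norm_num
    rw [Finset.prod_congr rfl h2, Finset.prod_const, card_univ]
  · push_neg at h
    obtain ⟨v, hv⟩ := h
    apply Finset.prod_eq_zero (mem_univ v)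
    rw [Nat.odd_iff.mpr (Nat.not_even_iff.mp hv)|>.neg_one_pow]
    ring
end

section
/- For any finite simple graph G, φ(G) = 2^{-3|V(G)|} · Σ over subsets U ⊆ V(G) such that the induced subgraph G|_U is Eulerian (all degrees even) of (-1)^{|E(U, V(G)\U)|} · 2^{|U|}. -/
open Finset

variable {V : Type*} [Fintype V] [DecidableEq V]

/-- Number of proper 3-colorings of the spanning subgraph with edge set `E'`. -/
def chi3E (V : Type*) [Fintype V] [DecidableEq V] (E' : Finset (Sym2 V)) : ℕ :=
  (Finset.univ.filter (fun c : V → Fin 3 =>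
    ∀ e ∈ E', ∀ u ∈ e, ∀ v ∈ e, u ≠ v → c u ≠ c v)).card

/-- The invariant φ. -/
def phi (G : SimpleGraph V) [DecidableRel G.Adj] : ℚ :=
  ((2 : ℚ) ^ (3 * Fintype.card V))⁻¹ *
    ∑ E' ∈ G.edgeFinset.powerset, (-2 : ℚ) ^ E'.card * chi3E V E'

/-- The induced subgraph of `G` on `U` is Eulerian: all its vertex degrees are even. -/
def indEulerian (G : SimpleGraph V) [DecidableRel G.Adj] (U : Finset V) : Prop :=
  ∀ v ∈ U, Even ((U.filter (fun w => G.Adj v w)).card)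

instance (G : SimpleGraph V) [DecidableRel G.Adj] (U : Finset V) :
    Decidable (indEulerian G U) := by unfold indEulerian; infer_instance

/-! ### Auxiliary definitions -/

/-- Edge weight: product of a vertex function over the two endpoints. -/
def edgeWt (f : V → ℚ) : Sym2 V → ℚ :=
  Sym2.lift ⟨fun u v => f u * f v, fun _ _ => mul_comm _ _⟩

@[simp] lemma edgeWt_mk (f : V → ℚ) (u v : V) : edgeWt f s(u, v) = f u * f v := rfl

lemma prod_dart_fst (H : SimpleGraph V) [DecidableRel H.Adj] (f : V → ℚ) :
    ∏ d : H.Dart, f d.fst = ∏ v, f v ^ H.degree v := by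
  rw [← Finset.prod_fiberwise Finset.univ (fun d : H.Dart => d.fst) (fun d => f d.fst)]
  refine Finset.prod_congr rfl fun v _ => ?_
  have h1 : ∀ d ∈ (Finset.univ.filter fun d : H.Dart => d.fst = v), f d.fst = f v := by
    intro d hd
    simp only [Finset.mem_filter] at hd
    rw [hd.2]
  rw [Finset.prod_congr rfl h1, Finset.prod_const, H.dart_fst_fiber_card_eq_degree v]

lemma prod_dart_fst_eq_prod_edges (H : SimpleGraph V) [DecidableRel H.Adj]
    (f : V → ℚ) :
    ∏ d : H.Dart, f d.fst = ∏ e ∈ H.edgeFinset, edgeWt f e := by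
  rw [← Finset.prod_fiberwise_of_maps_to (g := fun d : H.Dart => d.edge)
    (t := H.edgeFinset) (fun d _ => by simp [SimpleGraph.Dart.edge_mem]) (fun d => f d.fst)]
  refine Finset.prod_congr rfl fun e he => ?_
  rw [SimpleGraph.mem_edgeFinset] at he
  induction e with
  | _ u v =>
    have hadj : H.Adj u v := he
    let d : H.Dart := ⟨(u, v), hadj⟩
    have hfib : (Finset.univ.filter fun d' : H.Dart => d'.edge = s(u,v)) = {d, d.symm} := by
      have h2 := d.edge_fiber
      convert h2 using 2
      exact Iff.rfl
    rw [hfib, Finset.prod_insert (by simp [d.symm_ne.symm]), Finset.prod_singleton]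
    simp [d, SimpleGraph.Dart.symm]

/-- Multiplicative handshake lemma. -/
lemma prod_edgeWt (H : SimpleGraph V) [DecidableRel H.Adj] (f : V → ℚ) :
    ∏ e ∈ H.edgeFinset, edgeWt f e = ∏ v, f v ^ H.degree v := by
  rw [← prod_dart_fst_eq_prod_edges, prod_dart_fst]

/-- The induced subgraph on `U` as a simple graph on `V`. -/
def indG (G : SimpleGraph V) [DecidableRel G.Adj] (U : Finset V) : SimpleGraph V where
  Adj v w := G.Adj v w ∧ v ∈ U ∧ w ∈ U
  symm := ⟨fun _ _ h => ⟨h.1.symm, h.2.2, h.2.1⟩⟩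
  loopless := ⟨fun v h => G.loopless.irrefl v h.1⟩

instance (G : SimpleGraph V) [DecidableRel G.Adj] (U : Finset V) :
    DecidableRel (indG G U).Adj := fun v w => by unfold indG; simp only; infer_instance

lemma indG_degree (G : SimpleGraph V) [DecidableRel G.Adj] (U : Finset V) (v : V) :
    (indG G U).degree v = if v ∈ U then (U.filter (fun w => G.Adj v w)).card else 0 := by
  rw [← SimpleGraph.card_neighborFinset_eq_degree]
  by_cases hv : v ∈ U
  · simp only [hv, if_true]
    congr 1
    ext w
    rw [SimpleGraph.mem_neighborFinset]; simp [indG, hv, and_comm]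
  · simp only [hv, if_false, Finset.card_eq_zero]
    ext w
    rw [SimpleGraph.mem_neighborFinset]; simp [indG, hv]

lemma indG_edgeFinset (G : SimpleGraph V) [DecidableRel G.Adj] (U : Finset V) :
    (indG G U).edgeFinset = G.edgeFinset.filter (fun e => ∀ x ∈ e, x ∈ U) := by
  ext e
  induction e with
  | _ u v =>
    rw [SimpleGraph.mem_edgeFinset, SimpleGraph.mem_edgeSet]
    simp [SimpleGraph.mem_edgeFinset, SimpleGraph.mem_edgeSet, indG, Sym2.mem_iff]

/-- The properness predicate on one edge. -/
def properP (c : V → Fin 3) (e : Sym2 V) : Prop :=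
  ∀ u ∈ e, ∀ v ∈ e, u ≠ v → c u ≠ c v

instance (c : V → Fin 3) : DecidablePred (properP c) := fun e => by
  unfold properP; infer_instance

lemma properP_mk {c : V → Fin 3} {u v : V} (h : u ≠ v) :
    properP c s(u, v) ↔ c u ≠ c v := by
  constructor
  · intro H; exact H u (by simp) v (by simp) h
  · intro H x hx y hy hxy
    rw [Sym2.mem_iff] at hx hy
    rcases hx with rfl | rfl <;> rcases hy with rfl | rfl <;>
      first | exact absurd rfl hxy | exact H | exact H.symm

lemma chi3E_cast (E' : Finset (Sym2 V)) :
    (chi3E V E' : ℚ) = ∑ c : V → Fin 3, if ∀ e ∈ E', properP c e then (1 : ℚ) else 0 := by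
  rw [chi3E, Finset.card_filter]
  push_cast
  exact Finset.sum_congr rfl fun c _ => by simp [properP]; congr

lemma sum_powerset_pow {α : Type*} [DecidableEq α] (s : Finset α) (x : ℚ) :
    ∑ t ∈ s.powerset, x ^ t.card = (x + 1) ^ s.card := by
  rw [← Finset.prod_const, Finset.prod_add]
  exact Finset.sum_congr rfl fun t _ => by simp [Finset.prod_const]

lemma prod_ite_neg_one {α : Type*} (s : Finset α) (p : α → Prop) [DecidablePred p] :
    ∏ e ∈ s, (if p e then (-1 : ℚ) else 1) = (-1 : ℚ) ^ (s.filter p).card := by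
  rw [Finset.prod_ite, Finset.prod_const, Finset.prod_const]
  simp

/-- The coloring attached to `A ⊆ U`. -/
def colA (U A : Finset V) : V → Fin 3 :=
  fun v => if v ∈ A then 2 else if v ∈ U then 1 else 0

lemma colA_eq_zero_iff {U A : Finset V} (hA : A ⊆ U) (v : V) :
    colA U A v = 0 ↔ v ∉ U := by
  unfold colA
  by_cases h1 : v ∈ A
  · simp [h1, hA h1]
  · by_cases h2 : v ∈ U <;> simp [h1, h2]

lemma signP (G : SimpleGraph V) [DecidableRel G.Adj] {U A : Finset V} (hA : A ⊆ U) :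
    (-1 : ℚ) ^ (G.edgeFinset.filter (properP (colA U A))).card
      = (-1 : ℚ) ^ crossCard G U *
        ∏ e ∈ (indG G U).edgeFinset, edgeWt (fun v => if v ∈ A then (-1 : ℚ) else 1) e := by
  classical
  set c := colA U A with hc
  set ε : V → ℚ := fun v => if v ∈ A then (-1 : ℚ) else 1 with hε
  have hne : ∀ {u v : V}, G.Adj u v → u ≠ v := fun h => G.ne_of_adj h
  -- basic values of c
  have hcU : ∀ v ∈ U, c v = if v ∈ A then 2 else 1 := by
    intro v hv; simp only [hc, colA]; by_cases h : v ∈ A <;> simp [h, hv]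
  have hc0 : ∀ v, v ∉ U → c v = 0 := by
    intro v hv
    have hvA : v ∉ A := fun h => hv (hA h)
    simp only [hc, colA]; simp [hvA, hv]
  -- per-edge facts
  have hcrossP : ∀ e ∈ G.edgeFinset, (∃ a ∈ e, ∃ b ∈ e, a ∈ U ∧ b ∉ U) → properP c e := by
    intro e
    induction e with
    | _ u v =>
      intro he hcr
      have hadj : G.Adj u v := by rwa [SimpleGraph.mem_edgeFinset, SimpleGraph.mem_edgeSet] at he
      have huv := hne hadj
      rw [properP_mk huv]
      have h2 : (u ∈ U ∧ v ∉ U) ∨ (v ∈ U ∧ u ∉ U) := by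
        obtain ⟨a, ha, b, hb, hab⟩ := hcr
        rw [Sym2.mem_iff] at ha hb
        rcases ha with rfl | rfl <;> rcases hb with rfl | rfl <;> tauto
      rcases h2 with ⟨h1, h2⟩ | ⟨h1, h2⟩
      · rw [hcU u h1, hc0 v h2]; by_cases h : u ∈ A <;> simp [h] <;> decide
      · rw [hcU v h1, hc0 u h2]; by_cases h : v ∈ A <;> simp [h] <;> decide
  have houtP : ∀ e ∈ G.edgeFinset, ¬(∃ a ∈ e, ∃ b ∈ e, a ∈ U ∧ b ∉ U) →
      ¬(∀ x ∈ e, x ∈ U) → ¬ properP c e := by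
    intro e
    induction e with
    | _ u v =>
      intro he hncr hnin
      have hadj : G.Adj u v := by rwa [SimpleGraph.mem_edgeFinset, SimpleGraph.mem_edgeSet] at he
      have huv := hne hadj
      rw [properP_mk huv]
      have hu : u ∉ U := by
        by_contra hu
        by_cases hv : v ∈ U
        · exact hnin (by intro x hx; rw [Sym2.mem_iff] at hx; rcases hx with rfl | rfl <;> assumption)
        · exact hncr ⟨u, by simp, v, by simp, hu, hv⟩
      have hv : v ∉ U := by
        by_contra hv
        exact hncr ⟨v, by simp, u, by simp, hv, hu⟩
      rw [hc0 u hu, hc0 v hv]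
      simp
  have hinP : ∀ e ∈ G.edgeFinset, (∀ x ∈ e, x ∈ U) →
      (if properP c e then (-1 : ℚ) else 1) = edgeWt ε e := by
    intro e
    induction e with
    | _ u v =>
      intro he hin
      have hadj : G.Adj u v := by rwa [SimpleGraph.mem_edgeFinset, SimpleGraph.mem_edgeSet] at he
      have huv := hne hadj
      have hu : u ∈ U := hin u (by simp)
      have hv : v ∈ U := hin v (by simp)
      have h1 : edgeWt ε s(u, v) = ε u * ε v := rfl
      rw [h1, if_congr (properP_mk huv) rfl rfl]
      rw [hcU u hu, hcU v hv, hε]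
      by_cases h2 : u ∈ A <;> by_cases h3 : v ∈ A <;> simp [h2, h3] <;> decide
  -- now split the product
  rw [← prod_ite_neg_one]
  rw [← Finset.prod_filter_mul_prod_filter_not G.edgeFinset
    (fun e => ∃ a ∈ e, ∃ b ∈ e, a ∈ U ∧ b ∉ U)]
  congr 1
  · have h6 : ∀ e ∈ G.edgeFinset.filter (fun e => ∃ a ∈ e, ∃ b ∈ e, a ∈ U ∧ b ∉ U),
        (if properP c e then (-1 : ℚ) else 1) = -1 := by
      intro e he
      simp only [Finset.mem_filter] at he
      rw [if_pos (hcrossP e he.1 he.2)]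
    rw [Finset.prod_congr rfl h6, Finset.prod_const, crossCard]
  · -- non-cross part
    rw [← Finset.prod_filter_mul_prod_filter_not
      (G.edgeFinset.filter (fun e => ¬ ∃ a ∈ e, ∃ b ∈ e, a ∈ U ∧ b ∉ U))
      (fun e => ∀ x ∈ e, x ∈ U)]
    have h4 : ∏ e ∈ ((G.edgeFinset.filter (fun e => ¬ ∃ a ∈ e, ∃ b ∈ e, a ∈ U ∧ b ∉ U)).filter
        (fun e => ¬ ∀ x ∈ e, x ∈ U)), (if properP c e then (-1 : ℚ) else 1) = 1 := by
      refine Finset.prod_eq_one fun e he => ?_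
      simp only [Finset.mem_filter] at he
      rw [if_neg (houtP e he.1.1 he.1.2 he.2)]
    rw [h4, mul_one]
    have h5 : (G.edgeFinset.filter (fun e => ¬ ∃ a ∈ e, ∃ b ∈ e, a ∈ U ∧ b ∉ U)).filter
        (fun e => ∀ x ∈ e, x ∈ U) = (indG G U).edgeFinset := by
      rw [indG_edgeFinset, Finset.filter_filter]
      refine Finset.filter_congr fun e he => ?_
      constructor
      · exact fun h => h.2
      · intro h
        refine ⟨?_, h⟩
        rintro ⟨a, ha, b, hb, hab⟩
        exact hab.2 (h b hb)
    rw [h5]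
    exact Finset.prod_congr rfl fun e he => by
      rw [indG_edgeFinset, Finset.mem_filter] at he
      exact hinP e he.1 he.2

lemma eval_prod_eul (G : SimpleGraph V) [DecidableRel G.Adj] (U : Finset V) :
    ∏ v ∈ U, ((-1 : ℚ) ^ ((U.filter (fun w => G.Adj v w)).card) + 1)
      = if indEulerian G U then (2 : ℚ) ^ U.card else 0 := by
  by_cases hE : indEulerian G U
  · rw [if_pos hE]
    rw [Finset.prod_congr rfl (fun v hv => ?_), Finset.prod_const]
    rw [Even.neg_one_pow (hE v hv)]
    norm_num
  · rw [if_neg hE]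
    rw [indEulerian] at hE
    push_neg at hE
    obtain ⟨v, hv, hodd⟩ := hE
    refine Finset.prod_eq_zero hv ?_
    rw [Odd.neg_one_pow (Nat.not_even_iff_odd.1 hodd)]
    ring

lemma sum_colorings (G : SimpleGraph V) [DecidableRel G.Adj] (U : Finset V) :
    ∑ c ∈ Finset.univ.filter (fun c : V → Fin 3 => Finset.univ.filter (fun v => c v ≠ 0) = U),
        (-1 : ℚ) ^ (G.edgeFinset.filter (properP c)).card
      = if indEulerian G U then (-1 : ℚ) ^ crossCard G U * 2 ^ U.card else 0 := by
  classical
  have tri : ∀ x : Fin 3, x = 0 ∨ x = 1 ∨ x = 2 := by decide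
  have hbij : ∑ c ∈ Finset.univ.filter
        (fun c : V → Fin 3 => Finset.univ.filter (fun v => c v ≠ 0) = U),
        (-1 : ℚ) ^ (G.edgeFinset.filter (properP c)).card
      = ∑ A ∈ U.powerset, (-1 : ℚ) ^ (G.edgeFinset.filter (properP (colA U A))).card := by
    refine Finset.sum_bij' (i := fun c _ => Finset.univ.filter (fun v => c v = 2))
      (j := fun A _ => colA U A) ?_ ?_ ?_ ?_ ?_
    · intro c hc
      rw [Finset.mem_filter] at hc
      rw [Finset.mem_powerset]
      intro v hv
      rw [Finset.mem_filter] at hv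
      rw [← hc.2, Finset.mem_filter]
      refine ⟨Finset.mem_univ v, ?_⟩
      rw [hv.2]; decide
    · intro A hA
      rw [Finset.mem_powerset] at hA
      rw [Finset.mem_filter]
      refine ⟨Finset.mem_univ _, ?_⟩
      ext v
      simp only [Finset.mem_filter, Finset.mem_univ, true_and]
      rw [Ne, colA_eq_zero_iff hA]
      exact not_not
    · intro c hc
      rw [Finset.mem_filter] at hc
      have hmem : ∀ v, c v ≠ 0 ↔ v ∈ U := by
        intro v
        rw [← hc.2]
        simp
      funext v
      unfold colA
      rcases tri (c v) with h | h | h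
      · have hvU : v ∉ U := by rw [← hmem]; simp [h]
        have hvA : v ∉ Finset.univ.filter (fun w => c w = 2) := by simp [h]
        simp [hvA, hvU, h]
      · have hvU : v ∈ U := by rw [← hmem]; rw [h]; decide
        have hvA : v ∉ Finset.univ.filter (fun w => c w = 2) := by
          simp only [Finset.mem_filter, Finset.mem_univ, true_and]; rw [h]; decide
        simp [hvA, hvU, h]
      · have hvA : v ∈ Finset.univ.filter (fun w => c w = 2) := by simp [h]
        simp [hvA, h]
    · intro A hA
      rw [Finset.mem_powerset] at hA
      ext v
      simp only [Finset.mem_filter, Finset.mem_univ, true_and]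
      unfold colA
      by_cases h1 : v ∈ A
      · simp [h1]
      · by_cases h2 : v ∈ U <;> simp [h1, h2] <;> decide
    · intro c hc
      rw [Finset.mem_filter] at hc
      have hmem : ∀ v, c v ≠ 0 ↔ v ∈ U := by
        intro v
        rw [← hc.2]
        simp
      have hcol : colA U (Finset.univ.filter (fun v => c v = 2)) = c := by
        funext v
        unfold colA
        rcases tri (c v) with h | h | h
        · have hvU : v ∉ U := by rw [← hmem]; simp [h]
          have hvA : v ∉ Finset.univ.filter (fun w => c w = 2) := by simp [h]
          simp [hvA, hvU, h]
        · have hvU : v ∈ U := by rw [← hmem]; rw [h]; decide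
          have hvA : v ∉ Finset.univ.filter (fun w => c w = 2) := by
            simp only [Finset.mem_filter, Finset.mem_univ, true_and]; rw [h]; decide
          simp [hvA, hvU, h]
        · have hvA : v ∈ Finset.univ.filter (fun w => c w = 2) := by simp [h]
          simp [hvA, h]
      rw [hcol]
  rw [hbij]
  have hstep : ∀ A ∈ U.powerset,
      (-1 : ℚ) ^ (G.edgeFinset.filter (properP (colA U A))).card
        = (-1 : ℚ) ^ crossCard G U *
          ∏ e ∈ (indG G U).edgeFinset, edgeWt (fun v => if v ∈ A then (-1 : ℚ) else 1) e :=
    fun A hA => signP G (Finset.mem_powerset.1 hA)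
  rw [Finset.sum_congr rfl hstep, ← Finset.mul_sum]
  have hprod : ∀ A ∈ U.powerset,
      ∏ e ∈ (indG G U).edgeFinset, edgeWt (fun v => if v ∈ A then (-1 : ℚ) else 1) e
        = ∏ v ∈ U, (if v ∈ A then (-1 : ℚ) ^ ((U.filter (fun w => G.Adj v w)).card) else 1) := by
    intro A hA
    rw [prod_edgeWt]
    rw [← Finset.prod_subset (Finset.subset_univ U) (fun v _ hvU => ?_)]
    · refine Finset.prod_congr rfl fun v hv => ?_
      rw [indG_degree, if_pos hv]
      by_cases h1 : v ∈ A <;> simp [h1]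
    · rw [indG_degree, if_neg hvU, pow_zero]
  rw [Finset.sum_congr rfl hprod]
  have key : ∑ A ∈ U.powerset,
      ∏ v ∈ U, (if v ∈ A then (-1 : ℚ) ^ ((U.filter (fun w => G.Adj v w)).card) else 1)
      = ∏ v ∈ U, ((-1 : ℚ) ^ ((U.filter (fun w => G.Adj v w)).card) + 1) := by
    rw [Finset.prod_add]
    refine Finset.sum_congr rfl fun A hA => ?_
    rw [Finset.prod_ite_mem U A, Finset.inter_eq_right.2 (Finset.mem_powerset.1 hA)]
    simp
  rw [key, eval_prod_eul]
  by_cases hE : indEulerian G U <;> simp [hE]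

theorem phi_eq_eulerian_sum (G : SimpleGraph V) [DecidableRel G.Adj] :
    phi G = ((2 : ℚ) ^ (3 * Fintype.card V))⁻¹ *
      ∑ U ∈ Finset.univ.filter (fun U : Finset V => indEulerian G U),
        (-1 : ℚ) ^ crossCard G U * 2 ^ U.card := by
  rw [phi]
  congr 1
  have step1 : ∑ E' ∈ G.edgeFinset.powerset, (-2 : ℚ) ^ E'.card * chi3E V E'
      = ∑ c : V → Fin 3, (-1 : ℚ) ^ (G.edgeFinset.filter (properP c)).card := by
    have h1 : ∀ E' ∈ G.edgeFinset.powerset, (-2 : ℚ) ^ E'.card * chi3E V E'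
        = ∑ c : V → Fin 3, (-2 : ℚ) ^ E'.card * (if ∀ e ∈ E', properP c e then (1:ℚ) else 0) := by
      intro E' _
      rw [chi3E_cast, Finset.mul_sum]
    rw [Finset.sum_congr rfl h1, Finset.sum_comm]
    refine Finset.sum_congr rfl fun c _ => ?_
    have hsub : (G.edgeFinset.filter (properP c)).powerset ⊆ G.edgeFinset.powerset :=
      Finset.powerset_mono.2 (Finset.filter_subset _ _)
    rw [← Finset.sum_subset hsub (fun E' hE' hnot => ?_)]
    · have h2 : ∀ E' ∈ (G.edgeFinset.filter (properP c)).powerset,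
          (-2 : ℚ) ^ E'.card * (if ∀ e ∈ E', properP c e then (1:ℚ) else 0)
            = (-2 : ℚ) ^ E'.card := by
        intro E' hE'
        rw [Finset.mem_powerset] at hE'
        rw [if_pos (fun e he => (Finset.mem_filter.1 (hE' he)).2), mul_one]
      rw [Finset.sum_congr rfl h2, sum_powerset_pow]
      norm_num
    · have h3 : ¬ ∀ e ∈ E', properP c e := by
        intro hall
        exact hnot (Finset.mem_powerset.2 (fun e heE' => Finset.mem_filter.2
          ⟨Finset.mem_powerset.1 hE' heE', hall e heE'⟩))
      rw [if_neg h3, mul_zero]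
  rw [step1,
    ← Finset.sum_fiberwise Finset.univ (fun c : V → Fin 3 => Finset.univ.filter (fun v => c v ≠ 0))
      (fun c => (-1 : ℚ) ^ (G.edgeFinset.filter (properP c)).card)]
  rw [Finset.sum_congr rfl (fun U _ => sum_colorings G U)]
  rw [Finset.sum_filter]
end

section
/- For any finite simple graph G, φ(G) ≠ 0 and |φ(G)| ≤ (3/8)^{|V(G)|}; moreover this bound is attained by the edgeless graph on |V(G)| vertices. -/
open Finset

variable {V : Type*} [Fintype V] [DecidableEq V]

/-- auxiliary: number of properly-colored edges of `c` among edges of `G`. -/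
def mcount (G : SimpleGraph V) [DecidableRel G.Adj] (c : V → Fin 3) : ℕ :=
  (G.edgeFinset.filter (fun e => ∀ u ∈ e, ∀ v ∈ e, u ≠ v → c u ≠ c v)).card

lemma chi3E_eq (E' : Finset (Sym2 V)) :
    (chi3E V E' : ℚ) = ∑ c : V → Fin 3,
      ∏ e ∈ E', (if ∀ u ∈ e, ∀ v ∈ e, u ≠ v → c u ≠ c v then (1:ℚ) else 0) := by
  rw [chi3E, Finset.card_filter]
  push_cast
  refine Finset.sum_congr rfl fun c _ => ?_
  rw [Finset.prod_boole]
  congr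

lemma key (G : SimpleGraph V) [DecidableRel G.Adj] :
    ∑ E' ∈ G.edgeFinset.powerset, (-2 : ℚ) ^ E'.card * chi3E V E'
      = ∑ c : V → Fin 3, (-1 : ℚ) ^ (mcount G c) := by
  have h1 : ∀ c : V → Fin 3,
      ∏ e ∈ G.edgeFinset,
        ((-2:ℚ) * (if ∀ u ∈ e, ∀ v ∈ e, u ≠ v → c u ≠ c v then (1:ℚ) else 0) + 1)
      = (-1 : ℚ) ^ (mcount G c) := by
    intro c
    have : ∀ e ∈ G.edgeFinset,
        ((-2:ℚ) * (if ∀ u ∈ e, ∀ v ∈ e, u ≠ v → c u ≠ c v then (1:ℚ) else 0) + 1)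
        = (if ∀ u ∈ e, ∀ v ∈ e, u ≠ v → c u ≠ c v then (-1:ℚ) else 1) := by
      intro e _; split <;> ring
    rw [Finset.prod_congr rfl this, Finset.prod_ite, Finset.prod_const, Finset.prod_const,
      one_pow, mul_one, mcount]
  calc ∑ E' ∈ G.edgeFinset.powerset, (-2 : ℚ) ^ E'.card * chi3E V E'
      = ∑ c : V → Fin 3, ∑ E' ∈ G.edgeFinset.powerset,
          (∏ e ∈ E', ((-2:ℚ) * (if ∀ u ∈ e, ∀ v ∈ e, u ≠ v → c u ≠ c v then (1:ℚ) else 0))) *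
          ∏ e ∈ G.edgeFinset \ E', (1:ℚ) := by
        rw [Finset.sum_comm]
        refine Finset.sum_congr rfl fun E' _ => ?_
        rw [chi3E_eq, Finset.mul_sum]
        refine Finset.sum_congr rfl fun c _ => ?_
        rw [Finset.prod_mul_distrib, Finset.prod_const, Finset.prod_const, one_pow, mul_one]
    _ = ∑ c : V → Fin 3, (-1 : ℚ) ^ (mcount G c) := by
        refine Finset.sum_congr rfl fun c _ => ?_
        rw [← Finset.prod_add, h1]

lemma T_ne_zero (G : SimpleGraph V) [DecidableRel G.Adj] :
    (∑ c : V → Fin 3, (-1 : ℤ) ^ (mcount G c)) ≠ 0 := by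
  intro h
  have h2 := congrArg (fun z : ℤ => (z : ZMod 2)) h
  push_cast at h2
  have hneg : (-1 : ZMod 2) = 1 := by decide
  rw [hneg] at h2
  simp only [one_pow, Finset.sum_const, Finset.card_univ, nsmul_eq_mul, mul_one,
    Fintype.card_fun, Fintype.card_fin] at h2
  push_cast at h2
  rw [(by decide : (3 : ZMod 2) = 1), one_pow] at h2
  exact absurd h2 (by decide)

lemma pow_eq : ((2:ℚ) ^ (3 * Fintype.card V))⁻¹ * 3 ^ Fintype.card V
    = (3 / 8 : ℚ) ^ Fintype.card V := by
  have h8 : (8:ℚ) ^ Fintype.card V = 2 ^ (3 * Fintype.card V) := by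
    rw [pow_mul]; norm_num
  rw [div_pow, h8, div_eq_mul_inv, mul_comm]

theorem phi_ne_zero_and_bound (G : SimpleGraph V) [DecidableRel G.Adj] :
    phi G ≠ 0 ∧ |phi G| ≤ (3 / 8 : ℚ) ^ Fintype.card V ∧
      |phi (⊥ : SimpleGraph V)| = (3 / 8 : ℚ) ^ Fintype.card V := by
  have hphi : phi G = ((2 : ℚ) ^ (3 * Fintype.card V))⁻¹ *
      ∑ c : V → Fin 3, (-1 : ℚ) ^ (mcount G c) := by rw [phi, key]
  have hcast : (∑ c : V → Fin 3, (-1 : ℚ) ^ (mcount G c))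
      = ((∑ c : V → Fin 3, (-1 : ℤ) ^ (mcount G c) : ℤ) : ℚ) := by push_cast; rfl
  have h2ne : ((2 : ℚ) ^ (3 * Fintype.card V))⁻¹ ≠ 0 := by positivity
  refine ⟨?_, ?_, ?_⟩
  · rw [hphi, hcast]
    exact mul_ne_zero h2ne (by exact_mod_cast T_ne_zero G)
  · rw [hphi, abs_mul, abs_inv, abs_pow, abs_two, ← pow_eq]
    refine mul_le_mul_of_nonneg_left ?_ (by positivity)
    calc |∑ c : V → Fin 3, (-1 : ℚ) ^ (mcount G c)|
        ≤ ∑ c : V → Fin 3, |(-1 : ℚ) ^ (mcount G c)| := Finset.abs_sum_le_sum_abs _ _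
      _ = ∑ _c : V → Fin 3, (1:ℚ) := by
          refine Finset.sum_congr rfl fun c _ => ?_
          rw [abs_pow, abs_neg, abs_one, one_pow]
      _ = (3:ℚ) ^ Fintype.card V := by
          rw [Finset.sum_const, Finset.card_univ, Fintype.card_fun, Fintype.card_fin]
          push_cast; ring
  · have hm : ∀ c : V → Fin 3, mcount (⊥ : SimpleGraph V) c = 0 := by
      intro c
      simp [mcount, Finset.card_eq_zero, Finset.filter_eq_empty_iff]
    have hb : phi (⊥ : SimpleGraph V)
        = ((2:ℚ) ^ (3 * Fintype.card V))⁻¹ * 3 ^ Fintype.card V := by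
      rw [phi, key]
      congr 1
      calc ∑ c : V → Fin 3, (-1 : ℚ) ^ (mcount (⊥ : SimpleGraph V) c)
          = ∑ _c : V → Fin 3, (1:ℚ) := by
            refine Finset.sum_congr rfl fun c _ => ?_
            rw [hm c, pow_zero]
        _ = (3:ℚ) ^ Fintype.card V := by
            rw [Finset.sum_const, Finset.card_univ, Fintype.card_fun, Fintype.card_fin]
            push_cast; ring
    rw [hb, pow_eq, abs_of_nonneg (by positivity)]
end

section
/- Simplification equality: φ(G) = 2^{-3|V(G)|} Σ over ordered partitions V(G) = V₁ ⊔ V₂ ⊔ V₃ of (-1)^{|E(V₁,V₂)| + |E(V₂,V₃)| + |E(V₃,V₁)|}, where E(Vᵢ,Vⱼ) is the set of edges with one endpoint in Vᵢ and the other in Vⱼ. -/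
open Finset

variable {V : Type*} [Fintype V] [DecidableEq V]

/-- `e` is monochromatic under the partition `f` (both endpoints in the same class). -/
def monoOn (f : V → Fin 3) (e : Sym2 V) : Prop := ∀ u ∈ e, ∀ v ∈ e, f u = f v

instance (f : V → Fin 3) (e : Sym2 V) : Decidable (monoOn f e) := by
  unfold monoOn; infer_instance

lemma proper_iff_not_mono (G : SimpleGraph V) [DecidableRel G.Adj] (f : V → Fin 3)
    {e : Sym2 V} (he : e ∈ G.edgeFinset) :
    (∀ u ∈ e, ∀ v ∈ e, u ≠ v → f u ≠ f v) ↔ ¬ monoOn f e := by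
  rw [SimpleGraph.mem_edgeFinset] at he
  induction e with
  | _ a b =>
    have hab : a ≠ b := G.ne_of_adj he
    constructor
    · intro h hm
      exact h a (Sym2.mem_mk_left a b) b (Sym2.mem_mk_right a b) hab
        (hm a (Sym2.mem_mk_left a b) b (Sym2.mem_mk_right a b))
    · intro hm u hu v hv huv
      rw [Sym2.mem_iff] at hu hv
      intro hfe
      apply hm
      intro x hx y hy
      rw [Sym2.mem_iff] at hx hy
      rcases hu with rfl | rfl <;> rcases hv with rfl | rfl <;>
        rcases hx with rfl | rfl <;> rcases hy with rfl | rfl <;>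
        simp_all [eq_comm]

theorem phi_eq_partition_sum (G : SimpleGraph V) [DecidableRel G.Adj] :
    phi G = ((2 : ℚ) ^ (3 * Fintype.card V))⁻¹ *
      ∑ f : V → Fin 3, (-1 : ℚ) ^ (G.edgeFinset.filter (fun e => ¬ monoOn f e)).card := by
  unfold phi
  congr 1
  have key : ∀ E' ∈ G.edgeFinset.powerset,
      (-2 : ℚ) ^ E'.card * chi3E V E' =
      ∑ f : V → Fin 3,
        (if ∀ e ∈ E', ¬ monoOn f e then (-2 : ℚ) ^ E'.card else 0) := by
    intro E' hE'
    rw [mem_powerset] at hE'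
    rw [chi3E]
    rw [← Finset.sum_filter, Finset.sum_const, nsmul_eq_mul, mul_comm]
    congr 2
    apply congrArg
    apply Finset.filter_congr
    intro c _
    constructor
    · intro h e he
      exact (proper_iff_not_mono G c (hE' he)).mp (h e he)
    · intro h e he
      exact (proper_iff_not_mono G c (hE' he)).mpr (h e he)
  rw [Finset.sum_congr rfl key, Finset.sum_comm]
  apply Finset.sum_congr rfl
  intro f _
  rw [← Finset.sum_filter]
  have hset : (G.edgeFinset.powerset.filter (fun E' => ∀ e ∈ E', ¬ monoOn f e)) =
      (G.edgeFinset.filter (fun e => ¬ monoOn f e)).powerset := by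
    ext E'
    constructor
    · intro hE
      obtain ⟨h1, h2⟩ := mem_filter.mp hE
      rw [mem_powerset] at h1 ⊢
      intro e he
      exact mem_filter.mpr ⟨h1 he, h2 e he⟩
    · intro hE
      rw [mem_powerset] at hE
      exact mem_filter.mpr ⟨mem_powerset.mpr fun e he => (mem_filter.mp (hE he)).1,
        fun e he => (mem_filter.mp (hE he)).2⟩
  rw [hset]
  have := Finset.sum_pow_mul_eq_add_pow (-2 : ℚ) 1
    (G.edgeFinset.filter (fun e => ¬ monoOn f e))
  simp only [one_pow, mul_one] at this
  rw [this]
  norm_num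
end
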